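/- For positive integers l ≤ m and n, the number of subsets X of [l,m] = {l, ..., m} containing l with gcd(X ∪ {n}) = 1 equals the sum over common divisors d of l and n of μ(d)·2^(⌊m/d⌋ − l/d). -/

import Mathlib

/-!
Möbius inversion turns the condition `gcd (X ∪ {n}) = 1` into an alternating sum, over the
common divisors `d` of `l` and `n`, of the number of admissible `X` all of whose elements are
multiples of `d`. Such an `X` is `l` together with an arbitrary set of multiples of `d` in
`(l, m]`, and there are `m / d - l / d` of those.
-/

open Finset ArithmeticFunction
open scoped ArithmeticFunction.Moebius

namespace Nat

theorem card_Ioc_filter_dvd (a b d : ℕ) : #{x ∈ Ioc a b | d ∣ x} = b / d - a / d := by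
  rcases le_total a b with hab | hba
  · have hsplit : Ioc 0 b = Ioc 0 a ∪ Ioc a b := (Ioc_union_Ioc_eq_Ioc a.zero_le hab).symm
    have hdisj : Disjoint (Ioc 0 a) (Ioc a b) := Ioc_disjoint_Ioc_of_le le_rfl
    have hcard := Ioc_filter_dvd_card_eq_div b d
    rw [hsplit, filter_union, card_union_of_disjoint (disjoint_filter_filter hdisj),
      Ioc_filter_dvd_card_eq_div] at hcard
    omega
  · rw [Ioc_eq_empty_of_le hba, filter_empty, card_empty,
      Nat.sub_eq_zero_of_le (Nat.div_le_div_right hba)]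

end Nat

theorem sum_divisors_moebius (k : ℕ) :
    ∑ d ∈ k.divisors, (μ d : ℤ) = if k = 1 then 1 else 0 := by
  rw [← coe_mul_zeta_apply, moebius_mul_coe_zeta, one_apply]

theorem card_filter_eq_one_eq_sum_moebius {α : Type*} (S : Finset α) (f : α → ℕ) {G : ℕ}
    (hG : G ≠ 0) (hf : ∀ x ∈ S, f x ∣ G) :
    (#{x ∈ S | f x = 1} : ℤ) = ∑ d ∈ G.divisors, μ d * #{x ∈ S | d ∣ f x} := by
  calc (#{x ∈ S | f x = 1} : ℤ)
      = ∑ x ∈ S, ∑ d ∈ (f x).divisors, (μ d : ℤ) := by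
        rw [card_filter, Nat.cast_sum]
        refine sum_congr rfl fun x _ => ?_
        rw [sum_divisors_moebius]
        split_ifs <;> rfl
    _ = ∑ x ∈ S, ∑ d ∈ G.divisors, if d ∣ f x then (μ d : ℤ) else 0 := by
        refine sum_congr rfl fun x hx => ?_
        rw [← sum_filter, Nat.divisors_filter_dvd_of_dvd hG (hf x hx)]
    _ = ∑ d ∈ G.divisors, μ d * #{x ∈ S | d ∣ f x} := by
        rw [sum_comm]
        refine sum_congr rfl fun d _ => ?_
        rw [← sum_filter, sum_const, nsmul_eq_mul, mul_comm]

theorem card_filter_powerset_insert_mem {α : Type*} [DecidableEq α] {a : α} {T : Finset α}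
    (ha : a ∉ T) : #{X ∈ (insert a T).powerset | a ∈ X} = 2 ^ #T := by
  have himage : {X ∈ (insert a T).powerset | a ∈ X} = T.powerset.image (insert a) := by
    rw [powerset_insert, filter_union, filter_image,
      filter_false_of_mem fun X hX hamem => ha (mem_powerset.mp hX hamem),
      filter_true_of_mem fun X _ => mem_insert_self a X, empty_union]
  rw [himage, card_image_of_injOn, card_powerset]
  intro Y hY Z hZ hYZ
  have hnotin {Y : Finset α} (hY : Y ∈ (T.powerset : Set (Finset α))) : a ∉ Y :=
    fun h => ha (mem_powerset.mp hY h)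
  rw [← erase_insert (hnotin hY), hYZ, erase_insert (hnotin hZ)]

theorem card_subsets_Icc_mem_dvd_gcd {l m d : ℕ} (hlm : l ≤ m) (hd : d ∣ l) :
    #{X ∈ (Icc l m).powerset | l ∈ X ∧ d ∣ X.gcd id} = 2 ^ (m / d - l / d) := by
  have hsubsets : {X ∈ (Icc l m).powerset | l ∈ X ∧ d ∣ X.gcd id} =
      {X ∈ (insert l {x ∈ Ioc l m | d ∣ x}).powerset | l ∈ X} := by
    ext X
    simp only [mem_filter, mem_powerset, Finset.dvd_gcd_iff, id_eq, subset_iff, mem_insert,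
      mem_Icc, mem_Ioc]
    grind
  rw [hsubsets, card_filter_powerset_insert_mem (by simp), Nat.card_Ioc_filter_dvd]

theorem stmt7_general (l m n : ℕ) (hl : 0 < l) (hlm : l ≤ m) :
    ((((Finset.Icc l m).powerset.filter
        (fun X => l ∈ X ∧ Nat.gcd (X.gcd id) n = 1)).card : ℤ)) =
      ∑ d ∈ (Nat.gcd l n).divisors, (ArithmeticFunction.moebius d) * 2 ^ (m / d - l / d) := by
  have hdvd : ∀ X ∈ {X ∈ (Icc l m).powerset | l ∈ X}, Nat.gcd (X.gcd id) n ∣ Nat.gcd l n :=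
    fun X hX => Nat.gcd_dvd_gcd_of_dvd_left n (gcd_dvd (mem_filter.mp hX).2)
  rw [← filter_filter, card_filter_eq_one_eq_sum_moebius _ _ (Nat.gcd_pos_of_pos_left n hl).ne'
    hdvd]
  refine sum_congr rfl fun d hd => ?_
  have hdn : d ∣ l ∧ d ∣ n := Nat.dvd_gcd_iff.mp (Nat.dvd_of_mem_divisors hd)
  simp only [filter_filter, Nat.dvd_gcd_iff, hdn.2, and_true]
  rw [card_subsets_Icc_mem_dvd_gcd hlm hdn.1, Nat.cast_pow, Nat.cast_ofNat]

theorem stmt7 (l m n : ℕ) (hl : 0 < l) (hlm : l ≤ m) (hn : 0 < n) :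
    ((((Finset.Icc l m).powerset.filter
        (fun X => l ∈ X ∧ Nat.gcd (X.gcd id) n = 1)).card : ℤ)) =
      ∑ d ∈ (Nat.gcd l n).divisors, (ArithmeticFunction.moebius d) * 2 ^ (m / d - l / d) :=
  stmt7_general l m n hl hlm
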